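/- Let k ≥ 0 and let q ∈ 𝒫_{k+1|k+1} be a real polynomial in (x,y,z). Suppose that the pair (∂_x q, ∂_y q) lies in the space {(w₁ + y p, w₂ − x p) : w₁, w₂ ∈ 𝒫_{k|k}, p ∈ 𝒫̃_k(x,y)} and that ∂_z q ∈ 𝒫_{k|k} ⊕ 𝒫̃_{k+1}(x,y)·z^k. Then q ∈ 𝒫_{k|k} ⊕ 𝒫̃_{k+1}(x,y) ⊕ span{z^{k+1}}. -/

import Mathlib

open MvPolynomial

/-- Polynomials on `ℝ³`. -/
abbrev R3 := MvPolynomial (Fin 3) ℝ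

/-- Membership in `𝒫_{a|b}`: the span of monomials `x^i y^j z^l` with
`i + j ≤ a` and `l ≤ b`. -/
def memPab (a b : ℕ) (p : R3) : Prop :=
  ∀ m ∈ p.support, m 0 + m 1 ≤ a ∧ m 2 ≤ b

/-- Membership in `𝒫̃_d(x,y)`: homogeneous polynomials in `(x,y)` of total
degree exactly `d` (independent of `z`). -/
def memHomXY (d : ℕ) (p : R3) : Prop :=
  ∀ m ∈ p.support, m 0 + m 1 = d ∧ m 2 = 0

lemma coeff_pderiv' (i : Fin 3) (m : Fin 3 →₀ ℕ) (q : R3) :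
    coeff m (pderiv i q) = ((m i : ℝ) + 1) * coeff (m + Finsupp.single i 1) q := by
  classical
  induction q using MvPolynomial.induction_on' with
  | add p q hp hq => simp [hp, hq, mul_add]
  | monomial s a =>
    rw [pderiv_monomial, coeff_monomial, coeff_monomial]
    split_ifs with h h' h''
    · subst h'; simp [mul_comm]
    · have hsi : s i = 0 := by
        by_contra hs
        apply h'
        rw [← h, tsub_add_cancel_of_le]
        exact Finsupp.single_le_iff.mpr (Nat.one_le_iff_ne_zero.mpr hs)
      simp [hsi]
    · exfalso; apply h; subst h''; simp
    · ring

lemma coeff_filter_sum (q : R3) (P : (Fin 3 →₀ ℕ) → Prop) [DecidablePred P]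
    (n : Fin 3 →₀ ℕ) :
    coeff n (∑ m ∈ q.support.filter P, monomial m (coeff m q))
      = if P n then coeff n q else 0 := by
  rw [coeff_sum]
  simp only [coeff_monomial]
  rw [Finset.sum_ite_eq' (q.support.filter P) n (fun m => coeff m q)]
  by_cases hc : coeff n q = 0 <;> by_cases hP : P n <;>
    simp [Finset.mem_filter, MvPolynomial.mem_support_iff, hc, hP]

/-- If `q ∈ 𝒫_{k+1|k+1}` is such that
`(∂ₓ q, ∂_y q) ∈ {(w₁ + y p, w₂ − x p) : w₁, w₂ ∈ 𝒫_{k|k}, p ∈ 𝒫̃_k(x,y)}`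
and `∂_z q ∈ 𝒫_{k|k} ⊕ 𝒫̃_{k+1}(x,y)·z^k`, then
`q ∈ 𝒫_{k|k} ⊕ 𝒫̃_{k+1}(x,y) ⊕ span{z^{k+1}}`. -/
theorem stmt_12 (k : ℕ) (q : R3)
    (hq : memPab (k + 1) (k + 1) q)
    (hxy : ∃ w₁ w₂ p : R3, memPab k k w₁ ∧ memPab k k w₂ ∧ memHomXY k p ∧
      pderiv 0 q = w₁ + X 1 * p ∧ pderiv 1 q = w₂ - X 0 * p)
    (hz : ∃ w r : R3, memPab k k w ∧ memHomXY (k + 1) r ∧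
      pderiv 2 q = w + r * X 2 ^ k) :
    ∃ w r : R3, ∃ c : ℝ, memPab k k w ∧ memHomXY (k + 1) r ∧
      q = w + r + c • X 2 ^ (k + 1) := by
  classical
  obtain ⟨w₁, w₂, p, hw₁, hw₂, hp, hdx, hdy⟩ := hxy
  obtain ⟨w, r, hw, hr, hdz⟩ := hz
  have hpcoeff : ∀ m : Fin 3 →₀ ℕ, m 2 ≠ 0 → coeff m p = 0 := fun m hm => by
    rw [← notMem_support_iff]; intro hmem; exact hm (hp m hmem).2
  -- Claim A
  have claimA : ∀ m : Fin 3 →₀ ℕ, m 2 = k + 1 → m 0 + m 1 ≠ 0 → coeff m q = 0 := by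
    intro m hm2 h01
    by_cases h0 : m 0 ≠ 0
    · -- use pderiv 0
      set m' := m - Finsupp.single 0 1 with hm'def
      have hle : Finsupp.single (0 : Fin 3) 1 ≤ m :=
        Finsupp.single_le_iff.mpr (Nat.one_le_iff_ne_zero.mpr h0)
      have hmm : m' + Finsupp.single 0 1 = m := tsub_add_cancel_of_le hle
      have key := coeff_pderiv' 0 m' q
      rw [hmm, hdx] at key
      have hm'2 : m' 2 = k + 1 := by
        simp [hm'def, Finsupp.tsub_apply, Finsupp.single_apply, hm2]
      have hw₁0 : coeff m' w₁ = 0 := by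
        rw [← notMem_support_iff]; intro hmem
        have := (hw₁ m' hmem).2; omega
      have hXp0 : coeff m' (X 1 * p) = 0 := by
        rw [coeff_X_mul']
        split_ifs with h
        · apply hpcoeff
          simp [Finsupp.tsub_apply, Finsupp.single_apply, hm'2]
        · rfl
      rw [coeff_add, hw₁0, hXp0] at key
      have hne : ((m' 0 : ℝ) + 1) ≠ 0 := by positivity
      have := key.symm
      rw [add_zero] at this
      exact (mul_eq_zero.mp this).resolve_left hne
    · -- use pderiv 1
      push_neg at h0
      have h1 : m 1 ≠ 0 := by omega
      set m' := m - Finsupp.single 1 1 with hm'def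
      have hle : Finsupp.single (1 : Fin 3) 1 ≤ m :=
        Finsupp.single_le_iff.mpr (Nat.one_le_iff_ne_zero.mpr h1)
      have hmm : m' + Finsupp.single 1 1 = m := tsub_add_cancel_of_le hle
      have key := coeff_pderiv' 1 m' q
      rw [hmm, hdy] at key
      have hm'2 : m' 2 = k + 1 := by
        simp [hm'def, Finsupp.tsub_apply, Finsupp.single_apply, hm2]
      have hw₂0 : coeff m' w₂ = 0 := by
        rw [← notMem_support_iff]; intro hmem
        have := (hw₂ m' hmem).2; omega
      have hXp0 : coeff m' (X 0 * p) = 0 := by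
        rw [coeff_X_mul']
        split_ifs with h
        · apply hpcoeff
          simp [Finsupp.tsub_apply, Finsupp.single_apply, hm'2]
        · rfl
      rw [coeff_sub, hw₂0, hXp0, sub_self] at key
      have hne : ((m' 1 : ℝ) + 1) ≠ 0 := by positivity
      have := key.symm
      exact (mul_eq_zero.mp this).resolve_left hne
  -- Claim B
  have claimB : ∀ m : Fin 3 →₀ ℕ, m 0 + m 1 = k + 1 → m 2 ≠ 0 → m 2 ≤ k →
      coeff m q = 0 := by
    intro m h01 h2ne h2le
    set m' := m - Finsupp.single 2 1 with hm'def
    have hle : Finsupp.single (2 : Fin 3) 1 ≤ m :=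
      Finsupp.single_le_iff.mpr (Nat.one_le_iff_ne_zero.mpr h2ne)
    have hmm : m' + Finsupp.single 2 1 = m := tsub_add_cancel_of_le hle
    have key := coeff_pderiv' 2 m' q
    rw [hmm, hdz] at key
    have hm'0 : m' 0 = m 0 := by
      simp [hm'def, Finsupp.tsub_apply, Finsupp.single_apply]
    have hm'1 : m' 1 = m 1 := by
      simp [hm'def, Finsupp.tsub_apply, Finsupp.single_apply]
    have hm'2 : m' 2 = m 2 - 1 := by
      simp [hm'def, Finsupp.tsub_apply, Finsupp.single_apply]
    have hw0 : coeff m' w = 0 := by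
      rw [← notMem_support_iff]; intro hmem
      have := (hw m' hmem).1; omega
    have hrX0 : coeff m' (r * X 2 ^ k) = 0 := by
      rw [X_pow_eq_monomial, coeff_mul_monomial']
      split_ifs with h
      · exfalso
        have := Finsupp.single_le_iff.mp h
        omega
      · rfl
    rw [coeff_add, hw0, hrX0] at key
    have hne : ((m' 2 : ℝ) + 1) ≠ 0 := by positivity
    have := key.symm
    rw [add_zero] at this
    exact (mul_eq_zero.mp this).resolve_left hne
  -- Construct the decomposition
  set P₁ : (Fin 3 →₀ ℕ) → Prop := fun n => n 0 + n 1 ≤ k ∧ n 2 ≤ k with hP₁def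
  set P₂ : (Fin 3 →₀ ℕ) → Prop := fun n => n 0 + n 1 = k + 1 ∧ n 2 = 0 with hP₂def
  refine ⟨∑ m ∈ q.support.filter P₁, monomial m (coeff m q),
    ∑ m ∈ q.support.filter P₂, monomial m (coeff m q),
    coeff (Finsupp.single 2 (k + 1)) q, ?_, ?_, ?_⟩
  · intro m hm
    have h := MvPolynomial.mem_support_iff.mp hm
    rw [coeff_filter_sum] at h
    by_contra hP
    rw [if_neg hP] at h
    exact h rfl
  · intro m hm
    have h := MvPolynomial.mem_support_iff.mp hm
    rw [coeff_filter_sum] at h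
    by_contra hP
    rw [if_neg hP] at h
    exact h rfl
  · apply MvPolynomial.ext
    intro n
    rw [coeff_add, coeff_add, coeff_smul, coeff_filter_sum, coeff_filter_sum,
      coeff_X_pow]
    by_cases h3 : Finsupp.single (2 : Fin 3) (k + 1) = n
    · have hn0 : n 0 = 0 := by rw [← h3]; simp [Finsupp.single_apply]
      have hn1 : n 1 = 0 := by rw [← h3]; simp [Finsupp.single_apply]
      have hn2 : n 2 = k + 1 := by rw [← h3]; simp [Finsupp.single_apply]
      have h1 : ¬ P₁ n := by intro h; obtain ⟨ha, hb⟩ := h; omega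
      have h2 : ¬ P₂ n := by intro h; obtain ⟨ha, hb⟩ := h; omega
      rw [if_neg h1, if_neg h2, if_pos h3, ← h3]
      simp
    · rw [if_neg h3]
      by_cases h1 : P₁ n
      · have h2 : ¬ P₂ n := by
          intro h
          obtain ⟨ha, hb⟩ := h
          obtain ⟨hc, hd⟩ := h1
          omega
        rw [if_pos h1, if_neg h2]
        simp
      · rw [if_neg h1]
        by_cases h2 : P₂ n
        · rw [if_pos h2]; simp
        · rw [if_neg h2]
          simp only [smul_zero, add_zero, zero_add]
          by_cases hsupp : coeff n q = 0
          · exact hsupp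
          · exfalso
            have hmem : n ∈ q.support := MvPolynomial.mem_support_iff.mpr hsupp
            obtain ⟨hb1, hb2⟩ := hq n hmem
            by_cases hn2 : n 2 = k + 1
            · by_cases hsum : n 0 + n 1 = 0
              · apply h3
                ext i
                fin_cases i <;> simp [Finsupp.single_apply] <;> omega
              · exact hsupp (claimA n hn2 hsum)
            · have hn2' : n 2 ≤ k := by omega
              by_cases hsum : n 0 + n 1 ≤ k
              · exact h1 ⟨hsum, hn2'⟩
              · have hsum' : n 0 + n 1 = k + 1 := by omega
                by_cases hz0 : n 2 = 0
                · exact h2 ⟨hsum', hz0⟩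
                · exact hsupp (claimB n hsum' hz0 hn2')
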